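/- arXiv:2108.11925 — 3 statements merged into one kernel-verified Lean document; each statement's English description precedes it below -/
import Mathlib

section
/- Let q > 0 and define φ(x) = cos²(πx/q) for |x| < q/2 and φ(x) = 0 otherwise. Then for all x with |x| < q, the convolution (φ*φ)(x) = ∫_ℝ φ(y)φ(x−y) dy equals (q−|x|)/4 · (1 + (1/2)cos(2πx/q)) + (3q)/(16π) · sin(2π|x|/q), and (φ*φ)(x) = 0 for |x| ≥ q. -/
open MeasureTheory Real

/-- The Hann window of width `q`. -/
noncomputable def hann (q x : ℝ) : ℝ := if |x| < q / 2 then Real.cos (Real.pi * x / q) ^ 2 else 0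

/-- Autoconvolution of the Hann window over `ℝ`. -/
noncomputable def hconv (q x : ℝ) : ℝ := ∫ y : ℝ, hann q y * hann q (x - y)

/-!
For `0 ≤ x ≤ q` the supports of `hann q` and `hann q (x - ·)` overlap exactly in
`(x - q/2, q/2)`. There the integrand `cos² (π y / q) cos² (π (x - y) / q)` is, by product-to-sum,
a constant plus cosines of `2π y / q`, `2π (x - y) / q` and `2π (2y - x) / q`, so it has an explicit
elementary primitive and the formula is the increment of that primitive over the interval.
Negative `x` reduce to this case because `hann q` is even, and for `q ≤ |x|` the supports are
disjoint.
-/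

lemma cos_sq_mul_cos_sq (a b : ℝ) :
    cos a ^ 2 * cos b ^ 2 =
      (1 + cos (2 * a) + cos (2 * b) + cos (2 * a + 2 * b) / 2 + cos (2 * a - 2 * b) / 2) / 4 := by
  rw [cos_add, cos_sub, cos_two_mul, cos_two_mul, sin_two_mul, sin_two_mul]
  ring

noncomputable def hannConvPrimitive (q x y : ℝ) : ℝ :=
  (y + q / (2 * π) * sin (2 * π * y / q) - q / (2 * π) * sin (2 * π * (x - y) / q)
    + y * (cos (2 * π * x / q) / 2) + q / (8 * π) * sin (2 * π * (2 * y - x) / q)) / 4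

lemma hasDerivAt_hannConvPrimitive {q : ℝ} (hq : q ≠ 0) (x y : ℝ) :
    HasDerivAt (hannConvPrimitive q x) (cos (π * y / q) ^ 2 * cos (π * (x - y) / q) ^ 2) y := by
  have hlin : ∀ a b : ℝ, HasDerivAt (fun y : ℝ => 2 * π * (a * y + b) / q) (2 * π * a / q) y :=
    fun a b => by
      simpa using ((((hasDerivAt_id y).const_mul a).add_const b).const_mul (2 * π)).div_const q
  have h1 := ((hlin 1 0).sin.const_mul (q / (2 * π)))
  have h2 := ((hlin (-1) x).sin.const_mul (q / (2 * π)))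
  have h3 := ((hlin 2 (-x)).sin.const_mul (q / (8 * π)))
  have H := (((((hasDerivAt_id y).add h1).sub h2).add
    ((hasDerivAt_id y).mul_const (cos (2 * π * x / q) / 2))).add h3).div_const 4
  refine (H.congr_of_eventuallyEq (.of_forall fun z => ?_)).congr_deriv ?_
  · simp only [hannConvPrimitive, Pi.add_apply, Pi.sub_apply, id]
    ring_nf
  · rw [cos_sq_mul_cos_sq]
    field_simp
    ring_nf

lemma hannConvPrimitive_sub {q : ℝ} (hq : q ≠ 0) (x : ℝ) :
    hannConvPrimitive q x (q / 2) - hannConvPrimitive q x (x - q / 2) =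
      (q - x) / 4 * (1 + cos (2 * π * x / q) / 2) + 3 * q / (16 * π) * sin (2 * π * x / q) := by
  have e1 : 2 * π * (q / 2) / q = π := by field_simp
  have e2 : 2 * π * (x - q / 2) / q = 2 * π * x / q - π := by field_simp
  have e3 : 2 * π * (x - (x - q / 2)) / q = π := by field_simp; ring
  have e4 : 2 * π * (2 * (q / 2) - x) / q = 2 * π - 2 * π * x / q := by field_simp
  have e5 : 2 * π * (2 * (x - q / 2) - x) / q = 2 * π * x / q - 2 * π := by field_simp; ring
  simp only [hannConvPrimitive, e1, e2, e3, e4, e5, sin_pi, sin_sub_pi, sin_two_pi_sub,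
    sin_sub_two_pi]
  field_simp
  ring

lemma hann_neg (q y : ℝ) : hann q (-y) = hann q y := by
  rw [hann, hann, abs_neg, mul_neg, neg_div, cos_neg]

lemma hconv_neg (q x : ℝ) : hconv q (-x) = hconv q x := by
  rw [hconv, ← integral_neg_eq_self]
  simp_rw [hann_neg, show ∀ y, -x - -y = -(x - y) from fun y => by ring, hann_neg]
  rfl

lemma hconv_abs (q x : ℝ) : hconv q |x| = hconv q x := by
  rcases abs_choice x with h | h <;> rw [h]
  exact hconv_neg q x

lemma hann_mul_hann_sub_eq_indicator (q : ℝ) {x : ℝ} (hx : 0 ≤ x) (y : ℝ) :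
    hann q y * hann q (x - y) = (Set.Ioo (x - q / 2) (q / 2)).indicator
      (fun y => cos (π * y / q) ^ 2 * cos (π * (x - y) / q) ^ 2) y := by
  by_cases hy : y ∈ Set.Ioo (x - q / 2) (q / 2)
  · rw [Set.indicator_of_mem hy, hann, hann,
      if_pos (abs_lt.2 ⟨by linarith [hy.1], hy.2⟩),
      if_pos (abs_lt.2 ⟨by linarith [hy.2], by linarith [hy.1]⟩)]
  · rw [Set.indicator_of_notMem hy, hann, hann]
    split_ifs with h1 h2 <;> try simp only [mul_zero, zero_mul]
    exact absurd (Set.mem_Ioo.2 ⟨by linarith [(abs_lt.1 h2).2], (abs_lt.1 h1).2⟩) hy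

lemma hann_mul_hann_sub_eq_zero {q x : ℝ} (hx : q ≤ |x|) (y : ℝ) :
    hann q y * hann q (x - y) = 0 := by
  rw [hann, hann]
  split_ifs with h1 h2 <;> try simp only [mul_zero, zero_mul]
  have := abs_add_le y (x - y)
  rw [add_sub_cancel] at this
  linarith

lemma hconv_eq_intervalIntegral {q x : ℝ} (hx0 : 0 ≤ x) (hxq : x ≤ q) :
    hconv q x = ∫ y in (x - q / 2)..(q / 2), cos (π * y / q) ^ 2 * cos (π * (x - y) / q) ^ 2 := by
  simp_rw [hconv, hann_mul_hann_sub_eq_indicator q hx0]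
  rw [integral_indicator measurableSet_Ioo, ← integral_Ioc_eq_integral_Ioo,
    ← intervalIntegral.integral_of_le (by linarith)]

lemma hconv_of_nonneg_of_le {q x : ℝ} (hq : 0 < q) (hx0 : 0 ≤ x) (hxq : x ≤ q) :
    hconv q x =
      (q - x) / 4 * (1 + cos (2 * π * x / q) / 2) + 3 * q / (16 * π) * sin (2 * π * x / q) := by
  rw [hconv_eq_intervalIntegral hx0 hxq, intervalIntegral.integral_eq_sub_of_hasDerivAt
    (fun y _ => hasDerivAt_hannConvPrimitive hq.ne' x y)
    (Continuous.intervalIntegrable (by fun_prop) _ _),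
    hannConvPrimitive_sub hq.ne']

theorem hann_autoconv_formula (q : ℝ) (hq : 0 < q) (x : ℝ) :
    (|x| < q → hconv q x =
      (q - |x|) / 4 * (1 + Real.cos (2 * π * x / q) / 2)
        + 3 * q / (16 * π) * Real.sin (2 * π * |x| / q)) ∧
    (q ≤ |x| → hconv q x = 0) := by
  refine ⟨fun hx => ?_, fun hx => ?_⟩
  · have hcos : cos (2 * π * x / q) = cos (2 * π * |x| / q) := by
      rcases abs_choice x with h | h <;> rw [h]
      rw [mul_neg, neg_div, cos_neg]
    rw [← hconv_abs, hcos, hconv_of_nonneg_of_le hq (abs_nonneg x) hx.le]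
  · simp_rw [hconv, hann_mul_hann_sub_eq_zero hx, integral_zero]
end

section
/- Let q > 0, φ the Hann window of width q, and for t ∈ [q/2, q] the autoconvolution φ*φ is convex on [q/2, q]; i.e., (φ*φ)'' ≥ 0 on [q/2, q]. -/
/-!
On `[0, q]` the two windows overlap on `(x - q/2, q/2)`, and integrating the product of the
cosines there gives an explicit closed form `F`; for `x ≥ q` the overlap is empty and
`hconv q x = 0`. Since `F'(q) = F''(q) = 0`, the two pieces glue to a function that is twice
differentiable on `(0, ∞)`. With `t = 2πx/q ∈ [π, 2π]`, `F''(x) = -(π/4q) g(t)` where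
`g t = sin t + (2π - t) cos t`; as `g' t = -(2π - t) sin t ≥ 0` on `[π, 2π]` and `g(2π) = 0`,
`g ≤ 0` there, so `F'' ≥ 0` on `[q/2, q]`.
-/

open MeasureTheory Real

open Set Filter Topology

theorem HasDerivAt.of_eventuallyEq_nhdsLE_nhdsGE {F : Type*} [NormedAddCommGroup F]
    [NormedSpace ℝ F] {f g h : ℝ → F} {a : ℝ} {f' : F} (hg : HasDerivAt g f' a)
    (hh : HasDerivAt h f' a) (hfg : f =ᶠ[𝓝[≤] a] g) (hfh : f =ᶠ[𝓝[≥] a] h) :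
    HasDerivAt f f' a := by
  have hL := hg.hasDerivWithinAt.congr_of_eventuallyEq hfg (hfg.self_of_nhdsWithin self_mem_Iic)
  have hR := hh.hasDerivWithinAt.congr_of_eventuallyEq hfh (hfh.self_of_nhdsWithin self_mem_Ici)
  simpa [Iic_union_Ici] using hL.union hR

theorem sin_add_two_pi_sub_mul_cos_nonpos {t : ℝ} (ht : t ∈ Icc π (2 * π)) :
    sin t + (2 * π - t) * cos t ≤ 0 := by
  set g : ℝ → ℝ := fun t => sin t + (2 * π - t) * cos t
  have hg : ∀ u, HasDerivAt g (-((2 * π - u) * sin u)) u := fun u =>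
    ((hasDerivAt_sin u).add (((hasDerivAt_id' u).const_sub _).mul (hasDerivAt_cos u))).congr_deriv
      (by ring)
  have hmono : MonotoneOn g (Icc π (2 * π)) := by
    refine monotoneOn_of_hasDerivWithinAt_nonneg (convex_Icc _ _)
      (fun u _ => (hg u).continuousAt.continuousWithinAt) (fun u _ => (hg u).hasDerivWithinAt) ?_
    intro u hu
    rw [interior_Icc] at hu
    have hsin : sin u ≤ 0 := by
      rw [← sin_sub_two_pi]
      exact sin_nonpos_of_nonpos_of_neg_pi_le (by linarith [hu.2]) (by linarith [hu.1])
    nlinarith [hu.2]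
  have h2pi : 2 * π ∈ Icc π (2 * π) := ⟨by linarith [pi_pos], le_rfl⟩
  simpa [g] using hmono ht h2pi ht.2

lemma hasDerivAt_two_pi_mul_div (q x : ℝ) :
    HasDerivAt (fun x : ℝ => 2 * π * x / q) (2 * π / q) x := by
  simpa using ((hasDerivAt_id x).const_mul (2 * π)).div_const q

noncomputable def hconvFormula (q x : ℝ) : ℝ :=
  (q - x) / 4 + (q - x) * cos (2 * π * x / q) / 8 + 3 * q / (16 * π) * sin (2 * π * x / q)

noncomputable def hconvFormulaDeriv (q x : ℝ) : ℝ :=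
  -(1 / 4) + cos (2 * π * x / q) / 4 - (q - x) * (π / (4 * q)) * sin (2 * π * x / q)

noncomputable def hconvFormulaDeriv2 (q x : ℝ) : ℝ :=
  -(π / (4 * q)) * (sin (2 * π * x / q) + (2 * π - 2 * π * x / q) * cos (2 * π * x / q))

noncomputable def hannProdPrimitive (q x y : ℝ) : ℝ :=
  (y + q / (2 * π) * sin (2 * π * y / q) - q / (2 * π) * sin (2 * π * (x - y) / q)
    + y / 2 * cos (2 * π * x / q) + q / (8 * π) * sin (2 * π * (2 * y - x) / q)) / 4

section

variable {q : ℝ}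

lemma hasDerivAt_hconvFormula (hq : q ≠ 0) (x : ℝ) :
    HasDerivAt (hconvFormula q) (hconvFormulaDeriv q x) x := by
  have hθ := hasDerivAt_two_pi_mul_div q x
  have hx := (hasDerivAt_id' x).const_sub q
  refine (((hx.div_const 4).add ((hx.mul hθ.cos).div_const 8)).add
    (hθ.sin.const_mul (3 * q / (16 * π)))).congr_deriv ?_
  rw [hconvFormulaDeriv]
  field_simp
  ring

lemma hasDerivAt_hconvFormulaDeriv (hq : q ≠ 0) (x : ℝ) :
    HasDerivAt (hconvFormulaDeriv q) (hconvFormulaDeriv2 q x) x := by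
  have hθ := hasDerivAt_two_pi_mul_div q x
  have hx := (hasDerivAt_id' x).const_sub q
  refine (((hasDerivAt_const x (-(1 / 4) : ℝ)).add (hθ.cos.div_const 4)).sub
    ((hx.mul_const (π / (4 * q))).mul hθ.sin)).congr_deriv ?_
  rw [hconvFormulaDeriv2]
  field_simp
  ring

lemma hconvFormulaDeriv_self (hq : q ≠ 0) : hconvFormulaDeriv q q = 0 := by
  simp [hconvFormulaDeriv, mul_div_assoc, div_self hq]

lemma hconvFormulaDeriv2_self (hq : q ≠ 0) : hconvFormulaDeriv2 q q = 0 := by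
  simp [hconvFormulaDeriv2, mul_div_assoc, div_self hq]

lemma hconvFormulaDeriv2_nonneg (hq : 0 < q) {x : ℝ} (hx : x ∈ Icc (q / 2) q) :
    0 ≤ hconvFormulaDeriv2 q x := by
  have hθ : 2 * π * x / q ∈ Icc π (2 * π) := by
    constructor
    · rw [le_div_iff₀ hq]; nlinarith [hx.1, pi_pos]
    · rw [div_le_iff₀ hq]; nlinarith [hx.2, pi_pos]
  exact mul_nonneg_of_nonpos_of_nonpos (by have := pi_pos; rw [neg_nonpos]; positivity)
    (sin_add_two_pi_sub_mul_cos_nonpos hθ)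

lemma hasDerivAt_hannProdPrimitive (hq : q ≠ 0) (x y : ℝ) :
    HasDerivAt (hannProdPrimitive q x) (cos (π * y / q) ^ 2 * cos (π * (x - y) / q) ^ 2) y := by
  have hy := hasDerivAt_id' y
  have h1 := hasDerivAt_two_pi_mul_div q y
  have h2 := ((hy.const_sub x).const_mul (2 * π)).div_const q
  have h3 := (((hy.const_mul 2).sub_const x).const_mul (2 * π)).div_const q
  refine (((((hy.add (h1.sin.const_mul _)).sub (h2.sin.const_mul _)).add
    ((hy.div_const 2).mul_const _)).add (h3.sin.const_mul _)).div_const 4).congr_deriv ?_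
  have e1 : 2 * π * y / q = 2 * (π * y / q) := by ring
  have e2 : 2 * π * (x - y) / q = 2 * (π * (x - y) / q) := by ring
  have e3 : 2 * π * x / q = 2 * (π * y / q) + 2 * (π * (x - y) / q) := by ring
  have e4 : 2 * π * (2 * y - x) / q = 2 * (π * y / q) - 2 * (π * (x - y) / q) := by ring
  rw [e1, e2, e3, e4, cos_add, cos_sub, cos_two_mul, cos_two_mul]
  field_simp
  ring

lemma hannProdPrimitive_sub (hq : q ≠ 0) (x : ℝ) :
    hannProdPrimitive q x (q / 2) - hannProdPrimitive q x (x - q / 2) = hconvFormula q x := by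
  have e1 : 2 * π * (q / 2) / q = π := by field_simp
  have e2 : 2 * π * (x - q / 2) / q = 2 * π * x / q - π := by field_simp
  have e3 : 2 * π * (x - (x - q / 2)) / q = π := by field_simp; ring
  have e4 : 2 * π * (2 * (q / 2) - x) / q = -(2 * π * x / q - 2 * π) := by field_simp; ring
  have e5 : 2 * π * (2 * (x - q / 2) - x) / q = 2 * π * x / q - 2 * π := by field_simp; ring
  rw [hannProdPrimitive, hannProdPrimitive, e1, e2, e3, e4, e5, sin_neg, sin_sub_two_pi,
    sin_sub_pi, sin_pi, hconvFormula]
  field_simp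
  ring

lemma hann_mul_hann_sub {x : ℝ} (hx : 0 ≤ x) (y : ℝ) :
    hann q y * hann q (x - y) =
      (Ioo (x - q / 2) (q / 2)).indicator
        (fun y => cos (π * y / q) ^ 2 * cos (π * (x - y) / q) ^ 2) y := by
  have hoverlap : (|y| < q / 2 ∧ |x - y| < q / 2) ↔ y ∈ Ioo (x - q / 2) (q / 2) := by
    simp only [abs_lt, mem_Ioo]
    constructor
    · rintro ⟨⟨-, hy⟩, -, hxy⟩
      exact ⟨by linarith, hy⟩
    · rintro ⟨hxy, hy⟩
      exact ⟨⟨by linarith, hy⟩, by linarith, by linarith⟩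
  rw [indicator_apply, hann, hann]
  by_cases h : y ∈ Ioo (x - q / 2) (q / 2)
  · obtain ⟨hy, hxy⟩ := hoverlap.mpr h
    simp [h, hy, hxy]
  · rw [if_neg h]
    split_ifs with hy hxy
    · exact absurd (hoverlap.mp ⟨hy, hxy⟩) h
    all_goals simp

lemma hconv_eq_integral_Ioo {x : ℝ} (hx : 0 ≤ x) :
    hconv q x =
      ∫ y in Ioo (x - q / 2) (q / 2), cos (π * y / q) ^ 2 * cos (π * (x - y) / q) ^ 2 := by
  rw [hconv, ← integral_indicator measurableSet_Ioo]
  exact integral_congr_ae (ae_of_all _ (hann_mul_hann_sub hx))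

lemma hconv_eq_zero_of_le (hq : 0 ≤ q) {x : ℝ} (hx : q ≤ x) : hconv q x = 0 := by
  rw [hconv_eq_integral_Ioo (hq.trans hx), Ioo_eq_empty (by linarith), Measure.restrict_empty,
    integral_zero_measure]

lemma hconv_eq_hconvFormula (hq : 0 < q) {x : ℝ} (hx : x ∈ Icc 0 q) :
    hconv q x = hconvFormula q x := by
  rw [hconv_eq_integral_Ioo hx.1, ← integral_Ioc_eq_integral_Ioo,
    ← intervalIntegral.integral_of_le (by linarith [hx.2]),
    intervalIntegral.integral_eq_sub_of_hasDerivAt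
      (fun y _ => hasDerivAt_hannProdPrimitive hq.ne' x y)
      ((by fun_prop : Continuous _).intervalIntegrable _ _),
    hannProdPrimitive_sub hq.ne']

lemma hasDerivAt_hconv (hq : 0 < q) {x : ℝ} (hx : x ∈ Ioc 0 q) :
    HasDerivAt (hconv q) (hconvFormulaDeriv q x) x := by
  rcases hx.2.lt_or_eq with hxq | rfl
  · exact (hasDerivAt_hconvFormula hq.ne' x).congr_of_eventuallyEq
      (eventually_of_mem (isOpen_Ioo.mem_nhds ⟨hx.1, hxq⟩) fun _ hy =>
        hconv_eq_hconvFormula hq (Ioo_subset_Icc_self hy))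
  · refine (hasDerivAt_hconvFormula hq.ne' x).of_eventuallyEq_nhdsLE_nhdsGE
      (h := fun _ => 0) ?_ ?_ ?_
    · rw [hconvFormulaDeriv_self hq.ne']
      exact hasDerivAt_const x 0
    · exact eventually_of_mem (Ioc_mem_nhdsLE hq) fun y hy =>
        hconv_eq_hconvFormula hq (Ioc_subset_Icc_self hy)
    · exact eventually_of_mem self_mem_nhdsWithin fun y hy => hconv_eq_zero_of_le hq.le hy

lemma deriv_hconv_of_le (hq : 0 < q) {x : ℝ} (hx : q ≤ x) : deriv (hconv q) x = 0 := by
  rcases hx.lt_or_eq with hqx | rfl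
  · have hzero : hconv q =ᶠ[𝓝 x] fun _ => 0 :=
      eventually_of_mem (isOpen_Ioi.mem_nhds hqx) fun y hy => hconv_eq_zero_of_le hq.le hy.le
    rw [hzero.deriv_eq, deriv_const]
  · rw [(hasDerivAt_hconv hq ⟨hq, le_rfl⟩).deriv, hconvFormulaDeriv_self hq.ne']

lemma hasDerivAt_deriv_hconv (hq : 0 < q) {x : ℝ} (hx : x ∈ Ioc 0 q) :
    HasDerivAt (deriv (hconv q)) (hconvFormulaDeriv2 q x) x := by
  rcases hx.2.lt_or_eq with hxq | rfl
  · refine (hasDerivAt_hconvFormulaDeriv hq.ne' x).congr_of_eventuallyEq ?_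
    exact eventually_of_mem (isOpen_Ioo.mem_nhds ⟨hx.1, hxq⟩) fun y hy =>
      (hasDerivAt_hconv hq (Ioo_subset_Ioc_self hy)).deriv
  · refine (hasDerivAt_hconvFormulaDeriv hq.ne' x).of_eventuallyEq_nhdsLE_nhdsGE
      (h := fun _ => 0) ?_ ?_ ?_
    · rw [hconvFormulaDeriv2_self hq.ne']
      exact hasDerivAt_const x 0
    · exact eventually_of_mem (Ioc_mem_nhdsLE hq) fun y hy => (hasDerivAt_hconv hq hy).deriv
    · exact eventually_of_mem self_mem_nhdsWithin fun y hy => deriv_hconv_of_le hq hy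

end

theorem hann_autoconv_convex_on_right (q : ℝ) (hq : 0 < q) :
    ConvexOn ℝ (Set.Icc (q / 2) q) (hconv q) ∧
      ∀ x ∈ Set.Icc (q / 2) q, 0 ≤ deriv (deriv (hconv q)) x := by
  have hsub : Icc (q / 2) q ⊆ Ioc 0 q := fun x hx => ⟨by linarith [hx.1], hx.2⟩
  have hderiv2 : ∀ x ∈ Icc (q / 2) q, 0 ≤ deriv (deriv (hconv q)) x := fun x hx => by
    rw [(hasDerivAt_deriv_hconv hq (hsub hx)).deriv]
    exact hconvFormulaDeriv2_nonneg hq hx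
  refine ⟨convexOn_of_deriv2_nonneg (convex_Icc _ _) ?_ ?_ ?_ ?_, hderiv2⟩
  · exact fun x hx => (hasDerivAt_hconv hq (hsub hx)).continuousAt.continuousWithinAt
  · exact fun x hx =>
      (hasDerivAt_hconv hq (hsub (interior_subset hx))).differentiableAt.differentiableWithinAt
  · exact fun x hx => (hasDerivAt_deriv_hconv hq
      (hsub (interior_subset hx))).differentiableAt.differentiableWithinAt
  · exact fun x hx => hderiv2 x (interior_subset hx)
end

section
/- Let Y ⊂ 𝕋^d be a finite set, η: Y → 𝕋^d injective, and c⁽¹⁾, c⁽²⁾: Y → ℂ with Σ_t c_t⁽¹⁾ = Σ_t c_{η(t)}⁽²⁾ = 1. Then the generalized 1-Wasserstein distance between μ₁ = Σ_{t∈Y} c_t⁽¹⁾ δ_t and μ₂ = Σ_{t∈Y} c_{η(t)}⁽²⁾ δ_{η(t)} satisfies W₁(μ₁,μ₂) ≤ √|Y| · [ (Σ_t (|c_t⁽¹⁾|² + |c_{η(t)}⁽²⁾|²) ‖t−η(t)‖_{𝕋^d}²)^{1/2} + (1/√2)(Σ_t |c_t⁽¹⁾ − c_{η(t)}⁽²⁾|²)^{1/2}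 ]. -/
/-!
Since both atomic measures have total mass `1`, the pairing with `f` splits as
`∑ c₁(t) (f t - f (η t)) + ∑ (c₁(t) - c₂(η t)) (f (η t) - f z)` for any base point `z`.
The first sum is controlled by the Lipschitz bound `|f t - f (η t)| ≤ ‖t - η t‖`, the second
by the diameter `1/2` of the torus; Cauchy–Schwarz turns each `ℓ¹` sum into `√|Y|` times
an `ℓ²` sum.
-/

open MeasureTheory

/-- The `d`-dimensional torus `(ℝ/ℤ)^d`, with the sup metric. -/
abbrev Torus (d : ℕ) := Fin d → AddCircle (1 : ℝ)

open Finset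

theorem Finset.sum_mul_sub_mul_eq_of_sum_eq {ι R : Type*} [CommRing R] {s : Finset ι}
    {a b : ι → R} (h : ∑ i ∈ s, a i = ∑ i ∈ s, b i) (u v : ι → R) (z : R) :
    ∑ i ∈ s, (a i * u i - b i * v i) =
      ∑ i ∈ s, a i * (u i - v i) + ∑ i ∈ s, (a i - b i) * (v i - z) := by
  have split : ∀ i, a i * (u i - v i) + (a i - b i) * (v i - z) =
      (a i * u i - b i * v i) - (a i - b i) * z := fun i => by ring
  have hz : ∑ i ∈ s, (a i - b i) * z = 0 := by
    rw [← sum_mul, sum_sub_distrib, h, sub_self, zero_mul]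
  rw [← sum_add_distrib, sum_congr rfl fun i _ => split i]
  simp only [sum_sub_distrib, hz, sub_zero]

theorem norm_sum_le_sqrt_card_mul_sqrt {ι E : Type*} [SeminormedAddCommGroup E]
    (s : Finset ι) (w : ι → E) :
    ‖∑ i ∈ s, w i‖ ≤ √(#s : ℝ) * √(∑ i ∈ s, ‖w i‖ ^ 2) :=
  calc ‖∑ i ∈ s, w i‖ ≤ ∑ i ∈ s, ‖w i‖ := norm_sum_le _ _
    _ ≤ √(#s * ∑ i ∈ s, ‖w i‖ ^ 2) := Real.le_sqrt_of_sq_le sq_sum_le_card_mul_sum_sq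
    _ = √(#s : ℝ) * √(∑ i ∈ s, ‖w i‖ ^ 2) := Real.sqrt_mul (Nat.cast_nonneg _) _

theorem norm_sum_mul_ofReal_le {ι : Type*} (s : Finset ι) (a : ι → ℂ) (g : ι → ℝ) :
    ‖∑ i ∈ s, a i * (g i : ℂ)‖ ≤ √(#s : ℝ) * √(∑ i ∈ s, ‖a i‖ ^ 2 * g i ^ 2) := by
  simpa only [norm_mul, Complex.norm_real, Real.norm_eq_abs, mul_pow, sq_abs] using
    norm_sum_le_sqrt_card_mul_sqrt s fun i => a i * (g i : ℂ)

theorem Torus.dist_le_half {d : ℕ} (x y : Torus d) : dist x y ≤ 1 / 2 := by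
  refine (dist_pi_le_iff (by norm_num)).2 fun i => ?_
  simpa [dist_eq_norm] using
    AddCircle.norm_le_half_period (p := (1 : ℝ)) (x := x i - y i) one_ne_zero

theorem LipschitzWith.sub_sq_le_dist_sq {X : Type*} [PseudoMetricSpace X] {f : X → ℝ}
    (hf : LipschitzWith 1 f) (x y : X) : (f x - f y) ^ 2 ≤ dist x y ^ 2 := by
  have h := hf.dist_le_mul x y
  rw [NNReal.coe_one, one_mul, Real.dist_eq] at h
  rw [← sq_abs]
  exact pow_le_pow_left₀ (abs_nonneg _) h 2

theorem wasserstein_atomic_bound_general {d : ℕ} (Y : Finset (Torus d))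
    (η : Torus d → Torus d)
    (c₁ c₂ : Torus d → ℂ)
    (h₁ : ∑ t ∈ Y, c₁ t = 1) (h₂ : ∑ t ∈ Y, c₂ (η t) = 1) :
    ∀ f : Torus d → ℝ, LipschitzWith 1 f →
      ‖∑ t ∈ Y, (c₁ t * (f t : ℂ) - c₂ (η t) * (f (η t) : ℂ))‖ ≤
        Real.sqrt Y.card *
          (Real.sqrt (∑ t ∈ Y,
              (‖c₁ t‖ ^ 2 + ‖c₂ (η t)‖ ^ 2) * dist t (η t) ^ 2)
            + 1 / Real.sqrt 2 * Real.sqrt (∑ t ∈ Y, ‖c₁ t - c₂ (η t)‖ ^ 2)) := by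
  intro f hf
  rw [sum_mul_sub_mul_eq_of_sum_eq (b := fun t => c₂ (η t)) (h₁.trans h₂.symm) _ _
    (f 0 : ℂ), mul_add]
  simp only [← Complex.ofReal_sub]
  have hdiam : ∀ t, (f (η t) - f 0) ^ 2 ≤ 1 / 2 := fun t =>
    (hf.sub_sq_le_dist_sq _ _).trans <|
      (pow_le_pow_left₀ dist_nonneg (Torus.dist_le_half _ _) 2).trans (by norm_num)
  refine (norm_add_le _ _).trans (add_le_add ?_ ?_)
  · refine (norm_sum_mul_ofReal_le _ _ _).trans <| mul_le_mul_of_nonneg_left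
      (Real.sqrt_le_sqrt <| sum_le_sum fun t _ => ?_) (Real.sqrt_nonneg _)
    exact mul_le_mul (le_add_of_nonneg_right (sq_nonneg _)) (hf.sub_sq_le_dist_sq t (η t))
      (sq_nonneg _) (by positivity)
  · calc _ ≤ √(#Y : ℝ) * √(∑ t ∈ Y, ‖c₁ t - c₂ (η t)‖ ^ 2 * (f (η t) - f 0) ^ 2) :=
          norm_sum_mul_ofReal_le _ _ _
      _ ≤ √(#Y : ℝ) * √((∑ t ∈ Y, ‖c₁ t - c₂ (η t)‖ ^ 2) * (1 / 2)) := by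
          rw [sum_mul]
          gcongr with t
          exact hdiam t
      _ = √(#Y : ℝ) * (1 / √2 * √(∑ t ∈ Y, ‖c₁ t - c₂ (η t)‖ ^ 2)) := by
          rw [Real.sqrt_mul' _ (by norm_num), Real.sqrt_div' _ (by norm_num), Real.sqrt_one]
          ring

/-- Wasserstein bound for two atomic probability-like complex measures
`μ₁ = Σ_{t∈Y} c₁(t) δ_t` and `μ₂ = Σ_{t∈Y} c₂(η t) δ_{η t}`: for every real-valued
`1`-Lipschitz `f`, the pairing `|∫ f d(μ₁−μ₂)|` is bounded as claimed, hence so is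
`W₁(μ₁, μ₂) = sup_f |∫ f d(μ₁−μ₂)|`. -/
theorem wasserstein_atomic_bound {d : ℕ} (Y : Finset (Torus d))
    (η : Torus d → Torus d) (hη : Set.InjOn η Y)
    (c₁ c₂ : Torus d → ℂ)
    (h₁ : ∑ t ∈ Y, c₁ t = 1) (h₂ : ∑ t ∈ Y, c₂ (η t) = 1) :
    ∀ f : Torus d → ℝ, LipschitzWith 1 f →
      ‖∑ t ∈ Y, (c₁ t * (f t : ℂ) - c₂ (η t) * (f (η t) : ℂ))‖ ≤
        Real.sqrt Y.card *
          (Real.sqrt (∑ t ∈ Y,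
              (‖c₁ t‖ ^ 2 + ‖c₂ (η t)‖ ^ 2) * dist t (η t) ^ 2)
            + 1 / Real.sqrt 2 * Real.sqrt (∑ t ∈ Y, ‖c₁ t - c₂ (η t)‖ ^ 2)) :=
  wasserstein_atomic_bound_general Y η c₁ c₂ h₁ h₂
end
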